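/- arXiv:math/0702680 — 6 statements merged into one kernel-verified Lean document; each statement's English description precedes it below -/
import Mathlib

section
/- For all points p = (p₁, p₂) and q = (q₁, q₂) of the unit sphere S³ ⊂ ℂ², the infimum over θ₁, θ₂ ∈ ℝ of the geodesic distance arccos(Re(e^{iθ₁}·p₁·conj(q₁) + e^{iθ₂}·p₂·conj(q₂))) between (e^{iθ₁}p₁, e^{iθ₂}p₂) and q equals |arccos|p₁| − arccos|q₁||. In particular, the orbit space of the maximal torus T² acting on S³ is an interval of length π/2. -/
open Real Complex

/-!
Rotating each coordinate of `p` independently, the real inner product with `q` is at most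
`‖p₁‖‖q₁‖ + ‖p₂‖‖q₂‖`, with equality once both products `pᵢ q̄ᵢ` are rotated onto the positive
real axis. Writing `‖p₁‖ = cos α` and `‖q₁‖ = cos β` with `α, β ∈ [0, π/2]`, that maximal inner
product is `cos α cos β + sin α sin β = cos (α - β)`, so the minimal distance is `|α - β|`.
-/

theorem Complex.exp_neg_arg_mul_I_mul_self (z : ℂ) :
    exp (↑(-arg z) * I) * z = ‖z‖ := by
  nth_rewrite 2 [← norm_mul_exp_arg_mul_I z]
  rw [mul_left_comm, ← Complex.exp_add, ofReal_neg, neg_mul, neg_add_cancel, Complex.exp_zero,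
    mul_one]

theorem Complex.re_exp_mul_I_mul_add_le_norm_add_norm (θ₁ θ₂ : ℝ) (z₁ z₂ : ℂ) :
    (exp (θ₁ * I) * z₁ + exp (θ₂ * I) * z₂).re ≤ ‖z₁‖ + ‖z₂‖ :=
  calc (exp (θ₁ * I) * z₁ + exp (θ₂ * I) * z₂).re
      ≤ ‖exp (θ₁ * I) * z₁ + exp (θ₂ * I) * z₂‖ := re_le_norm _
    _ ≤ ‖exp (θ₁ * I) * z₁‖ + ‖exp (θ₂ * I) * z₂‖ := norm_add_le _ _
    _ = ‖z₁‖ + ‖z₂‖ := by simp only [norm_mul, norm_exp_ofReal_mul_I, one_mul]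

theorem Complex.isLeast_arccos_re_exp_mul_I_mul_add (z₁ z₂ : ℂ) :
    IsLeast {t : ℝ | ∃ θ₁ θ₂ : ℝ, t = arccos (exp (θ₁ * I) * z₁ + exp (θ₂ * I) * z₂).re}
      (arccos (‖z₁‖ + ‖z₂‖)) := by
  refine ⟨⟨-arg z₁, -arg z₂, ?_⟩, ?_⟩
  · simp only [exp_neg_arg_mul_I_mul_self, ← ofReal_add, ofReal_re]
  · rintro t ⟨θ₁, θ₂, rfl⟩
    exact antitone_arccos (re_exp_mul_I_mul_add_le_norm_add_norm θ₁ θ₂ z₁ z₂)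

theorem Real.abs_arccos_sub_arccos {a b : ℝ} (ha₁ : -1 ≤ a) (ha₂ : a ≤ 1) (hb₁ : -1 ≤ b)
    (hb₂ : b ≤ 1) :
    |arccos a - arccos b| = arccos (a * b + √(1 - a ^ 2) * √(1 - b ^ 2)) := by
  have hcos : cos |arccos a - arccos b| = a * b + √(1 - a ^ 2) * √(1 - b ^ 2) := by
    rw [cos_abs, cos_sub, cos_arccos ha₁ ha₂, cos_arccos hb₁ hb₂, sin_arccos, sin_arccos]
  have hle : |arccos a - arccos b| ≤ π := by
    rw [abs_sub_le_iff]
    constructor <;> linarith [arccos_nonneg a, arccos_nonneg b, arccos_le_pi a, arccos_le_pi b]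
  rw [← hcos, arccos_cos (abs_nonneg _) hle]

theorem Real.sqrt_one_sub_sq_eq_of_sq_add_sq_eq_one {a b : ℝ} (hb : 0 ≤ b)
    (h : a ^ 2 + b ^ 2 = 1) : √(1 - a ^ 2) = b := by
  rw [← h, add_sub_cancel_left, sqrt_sq hb]

/-- For points `p = (p₁, p₂)` and `q = (q₁, q₂)` on the unit sphere
`S³ ⊂ ℂ²`, the distance between the orbits of `p` and `q` under the maximal torus
`(z, w) ↦ (e^{iθ₁}z, e^{iθ₂}w)` equals `|arccos |p₁| − arccos |q₁||`.  In particular the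
orbit space of `T²` acting on `S³` is an interval of length `π/2`. -/
theorem torus_orbit_distance_on_S3 (p₁ p₂ q₁ q₂ : ℂ)
    (hp : ‖p₁‖ ^ 2 + ‖p₂‖ ^ 2 = 1)
    (hq : ‖q₁‖ ^ 2 + ‖q₂‖ ^ 2 = 1) :
    sInf {t : ℝ | ∃ θ₁ θ₂ : ℝ,
        t = Real.arccos ((Complex.exp (θ₁ * Complex.I) * p₁ * (starRingEnd ℂ) q₁ +
          Complex.exp (θ₂ * Complex.I) * p₂ * (starRingEnd ℂ) q₂).re)} =
      |Real.arccos (‖p₁‖) - Real.arccos (‖q₁‖)| := by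
  have hp₁ : ‖p₁‖ ≤ 1 := by nlinarith [norm_nonneg p₁]
  have hq₁ : ‖q₁‖ ≤ 1 := by nlinarith [norm_nonneg q₁]
  simp only [mul_assoc]
  rw [(isLeast_arccos_re_exp_mul_I_mul_add _ _).csInf_eq,
    abs_arccos_sub_arccos (by linarith [norm_nonneg p₁]) hp₁ (by linarith [norm_nonneg q₁]) hq₁,
    sqrt_one_sub_sq_eq_of_sq_add_sq_eq_one (norm_nonneg _) hp,
    sqrt_one_sub_sq_eq_of_sq_add_sq_eq_one (norm_nonneg _) hq]
  simp only [norm_mul, Complex.norm_conj]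
end

section
/- Consider the Hopf circle action on the unit quaternions S³ given by left multiplication q ↦ (cos θ + sin θ·k)·q. For all unit quaternions p and q, the infimum over θ ∈ ℝ of the geodesic distance arccos(re((cos θ + sin θ·k) * p * star q)) between (cos θ + sin θ·k)·p and q equals arccos(√(re(w)² + im_k(w)²)), where w = p * star q and im_k(w) denotes the coefficient of k in w. (This is the distance formula exhibiting S³ modulo the free circle action T_{1,1} as the round 2-sphere of radius 1/2.) -/
open Quaternion Real

noncomputable section

/-- The unit quaternion `cos θ + sin θ · k`. -/
def rotk (θ : ℝ) : ℍ[ℝ] := ⟨Real.cos θ, 0, 0, Real.sin θ⟩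

/-!
Writing `w = p · star q`, the real part of `rotk θ · w` is `cos θ · re w - sin θ · im_k w`, the
real part of `e^{iθ} (re w + i im_k w)`. Its maximum over `θ` is `√(re(w)² + im_k(w)²)`,
attained at `θ = -arg (re w + i im_k w)`, and `arccos` is antitone, so the infimum of the
distances is `arccos` of that maximum.
-/

theorem re_rotk_mul (θ : ℝ) (w : ℍ[ℝ]) :
    (rotk θ * w).re = Real.cos θ * w.re - Real.sin θ * w.imK := by
  rw [Quaternion.re_mul]
  simp [rotk]

theorem cos_mul_sub_sin_mul_le_sqrt (θ a b : ℝ) :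
    Real.cos θ * a - Real.sin θ * b ≤ √(a ^ 2 + b ^ 2) := by
  apply Real.le_sqrt_of_sq_le
  nlinarith [Real.sin_sq_add_cos_sq θ, sq_nonneg (Real.sin θ * a + Real.cos θ * b)]

theorem cos_neg_arg_mul_sub_sin_neg_arg_mul (a b : ℝ) :
    Real.cos (-Complex.arg ⟨a, b⟩) * a - Real.sin (-Complex.arg ⟨a, b⟩) * b = √(a ^ 2 + b ^ 2) := by
  set z : ℂ := ⟨a, b⟩
  have hnorm : ‖z‖ = √(a ^ 2 + b ^ 2) := by
    rw [Complex.norm_def, Complex.normSq_apply, sq, sq]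
  conv_lhs => rw [show a = z.re from rfl, show b = z.im from rfl, ← Complex.norm_mul_cos_arg,
    ← Complex.norm_mul_sin_arg, Real.cos_neg, Real.sin_neg]
  linear_combination ‖z‖ * Real.sin_sq_add_cos_sq (Complex.arg z) + hnorm

theorem isGreatest_range_re_rotk_mul (w : ℍ[ℝ]) :
    IsGreatest (Set.range fun θ ↦ (rotk θ * w).re) √(w.re ^ 2 + w.imK ^ 2) := by
  refine ⟨⟨-Complex.arg ⟨w.re, w.imK⟩, ?_⟩, ?_⟩
  · exact (re_rotk_mul _ w).trans (cos_neg_arg_mul_sub_sin_neg_arg_mul _ _)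
  · rintro _ ⟨θ, rfl⟩
    exact (re_rotk_mul θ w).trans_le <| cos_mul_sub_sin_mul_le_sqrt θ _ _

theorem hopf_orbit_distance_general (p q : ℍ[ℝ]) :
    sInf {t : ℝ | ∃ θ : ℝ, t = Real.arccos ((rotk θ * p * star q).re)} =
      Real.arccos (Real.sqrt ((p * star q).re ^ 2 + (p * star q).imK ^ 2)) := by
  have hset : {t : ℝ | ∃ θ : ℝ, t = Real.arccos ((rotk θ * p * star q).re)} =
      Real.arccos '' Set.range fun θ ↦ (rotk θ * (p * star q)).re := by
    ext t
    simp [eq_comm, mul_assoc]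
  rw [hset]
  exact (Real.antitone_arccos.map_isGreatest (isGreatest_range_re_rotk_mul _)).csInf_eq

/-- For the Hopf circle action `q ↦ (cos θ + sin θ·k)·q` on the unit
quaternions, the distance between the orbits of unit quaternions `p` and `q` equals
`arccos √(re(w)² + im_k(w)²)` where `w = p · (star q)`.  (This exhibits `S³/T_{1,1}` as the
round 2-sphere of radius `1/2`.) -/
theorem hopf_orbit_distance (p q : ℍ[ℝ]) (hp : ‖p‖ = 1) (hq : ‖q‖ = 1) :
    sInf {t : ℝ | ∃ θ : ℝ, t = Real.arccos ((rotk θ * p * star q).re)} =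
      Real.arccos (Real.sqrt ((p * star q).re ^ 2 + (p * star q).imK ^ 2)) :=
  hopf_orbit_distance_general p q

end
end

section
/- Let k and m be positive coprime integers and consider the circle action T_{k,m} on S³ ⊂ ℂ² given by (z, w) ↦ (e^{ikθ}z, e^{imθ}w). Then the diameter of the orbit space S³/T_{k,m} equals π/2; that is, the supremum over pairs p = (p₁,p₂), q = (q₁,q₂) ∈ S³ of the infimum over θ ∈ ℝ of arccos(Re(e^{ikθ}p₁·conj(q₁) + e^{imθ}p₂·conj(q₂))) equals π/2, the supremum being attained by the orbits of (1, 0) and (0, 1). -/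
open Real Complex Finset

/-!
Averaging over the `N`-th roots of unity kills every frequency not divisible by `N`, so a
trigonometric polynomial without constant term has mean zero over `N` equally spaced angles once
`N` exceeds all its frequencies; hence its real part is nonnegative at one of them. For the orbit
distance this gives a `θ` with `arccos (⋯) ≤ π / 2`, so every orbit distance is at most `π / 2`,
while the orbits of `(1, 0)` and `(0, 1)` are orthogonal.
-/

theorem sum_range_exp_two_pi_mul_I_mul_div_eq_zero {N : ℕ} {k : ℤ} (hk : ¬ (N : ℤ) ∣ k) :
    ∑ j ∈ range N, exp (2 * π * I * k * j / N) = 0 := by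
  rcases eq_or_ne N 0 with rfl | hN
  · simp
  have hζ := isPrimitiveRoot_exp N hN
  set x := exp (2 * π * I / N) ^ k
  have hx : x ≠ 1 := (hζ.zpow_eq_one_iff_dvd k).not.2 hk
  have hxN : x ^ N = 1 := by
    rw [← zpow_natCast, ← zpow_mul, mul_comm k, zpow_mul, zpow_natCast, hζ.pow_eq_one, one_zpow]
  have hterm (j : ℕ) : exp (2 * π * I * k * j / N) = x ^ j := by
    rw [← zpow_natCast, ← zpow_mul, ← exp_int_mul]
    push_cast
    ring_nf
  simp_rw [hterm, geom_sum_eq hx, hxN, sub_self, zero_div]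

theorem exists_re_sum_exp_mul_nonneg {ι : Type*} (s : Finset ι) (k : ι → ℤ)
    (hk : ∀ i ∈ s, k i ≠ 0) (a : ι → ℂ) :
    ∃ θ : ℝ, 0 ≤ (∑ i ∈ s, exp (k i * θ * I) * a i).re := by
  set N := ∑ i ∈ s, (k i).natAbs + 1
  have hndvd : ∀ i ∈ s, ¬ (N : ℤ) ∣ k i := by
    intro i hi hdvd
    have hle : (k i).natAbs ≤ ∑ i ∈ s, (k i).natAbs :=
      single_le_sum (f := fun i => (k i).natAbs) (fun _ _ => Nat.zero_le _) hi
    have := Int.natAbs_le_of_dvd_ne_zero hdvd (hk i hi)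
    omega
  have hmean : ∑ j ∈ range N, (∑ i ∈ s, exp (k i * (2 * π * j / N : ℝ) * I) * a i).re = 0 := by
    rw [← re_sum, sum_comm]
    refine (congrArg re (sum_eq_zero fun i hi => ?_)).trans zero_re
    rw [← sum_mul, mul_eq_zero]
    left
    convert sum_range_exp_two_pi_mul_I_mul_div_eq_zero (hndvd i hi) using 3 with j
    push_cast
    ring
  obtain ⟨j, -, hj⟩ := exists_le_of_sum_le (nonempty_range_iff.2 (by positivity))
    (sum_const_zero.trans hmean.symm).le
  exact ⟨_, hj⟩

theorem sInf_arccos_le_pi_div_two {α : Type*} {f : α → ℝ} (h : ∃ θ, 0 ≤ f θ) :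
    sInf {t | ∃ θ, t = arccos (f θ)} ≤ π / 2 := by
  obtain ⟨θ, hθ⟩ := h
  exact csInf_le_of_le ⟨0, by rintro _ ⟨θ, rfl⟩; exact arccos_nonneg _⟩ ⟨θ, rfl⟩
    (arccos_le_pi_div_two.2 hθ)

theorem diameter_S3_mod_Tkm_general (k m : ℕ) (hk : 0 < k) (hm : 0 < m) :
    sSup {d : ℝ | ∃ p₁ p₂ q₁ q₂ : ℂ,
        ‖p₁‖ ^ 2 + ‖p₂‖ ^ 2 = 1 ∧
        ‖q₁‖ ^ 2 + ‖q₂‖ ^ 2 = 1 ∧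
        d = sInf {t : ℝ | ∃ θ : ℝ,
          t = Real.arccos ((Complex.exp ((k : ℝ) * θ * Complex.I) * p₁ * (starRingEnd ℂ) q₁ +
            Complex.exp ((m : ℝ) * θ * Complex.I) * p₂ * (starRingEnd ℂ) q₂).re)}} =
      π / 2 ∧
    sInf {t : ℝ | ∃ θ : ℝ,
        t = Real.arccos ((Complex.exp ((k : ℝ) * θ * Complex.I) * 1 * (starRingEnd ℂ) 0 +
          Complex.exp ((m : ℝ) * θ * Complex.I) * 0 * (starRingEnd ℂ) 1).re)} = π / 2 := by
  have hpoles : sInf {t : ℝ | ∃ θ : ℝ,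
      t = Real.arccos ((Complex.exp ((k : ℝ) * θ * Complex.I) * 1 * (starRingEnd ℂ) 0 +
        Complex.exp ((m : ℝ) * θ * Complex.I) * 0 * (starRingEnd ℂ) 1).re)} = π / 2 := by
    simp
  refine ⟨IsGreatest.csSup_eq ⟨⟨1, 0, 0, 1, by simp, by simp, hpoles.symm⟩, ?_⟩, hpoles⟩
  rintro _ ⟨p₁, p₂, q₁, q₂, -, -, rfl⟩
  apply sInf_arccos_le_pi_div_two
  obtain ⟨θ, hθ⟩ := exists_re_sum_exp_mul_nonneg univ ![(k : ℤ), m]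
    (by simp [Fin.forall_fin_two, hk.ne', hm.ne']) ![p₁ * starRingEnd ℂ q₁, p₂ * starRingEnd ℂ q₂]
  exact ⟨θ, by simpa [Fin.sum_univ_two, mul_assoc] using hθ⟩

/-- For coprime positive integers `k, m`, the circle action `T_{k,m}` on
`S³ ⊂ ℂ²`, `(z, w) ↦ (e^{ikθ}z, e^{imθ}w)`, has orbit space of diameter `π/2`; the
supremum of orbit distances is `π/2` and it is attained by the orbits of `(1, 0)` and
`(0, 1)`. -/
theorem diameter_S3_mod_Tkm (k m : ℕ) (hk : 0 < k) (hm : 0 < m)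
    (hcop : Nat.Coprime k m) :
    sSup {d : ℝ | ∃ p₁ p₂ q₁ q₂ : ℂ,
        ‖p₁‖ ^ 2 + ‖p₂‖ ^ 2 = 1 ∧
        ‖q₁‖ ^ 2 + ‖q₂‖ ^ 2 = 1 ∧
        d = sInf {t : ℝ | ∃ θ : ℝ,
          t = Real.arccos ((Complex.exp ((k : ℝ) * θ * Complex.I) * p₁ * (starRingEnd ℂ) q₁ +
            Complex.exp ((m : ℝ) * θ * Complex.I) * p₂ * (starRingEnd ℂ) q₂).re)}} =
      π / 2 ∧
    sInf {t : ℝ | ∃ θ : ℝ,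
        t = Real.arccos ((Complex.exp ((k : ℝ) * θ * Complex.I) * 1 * (starRingEnd ℂ) 0 +
          Complex.exp ((m : ℝ) * θ * Complex.I) * 0 * (starRingEnd ℂ) 1).re)} = π / 2 :=
  diameter_S3_mod_Tkm_general k m hk hm
end

section
/- Let m, n ≥ 1 and L = lcm(m, n). Then the set of products {a * star b : a ∈ 𝐃_m, b ∈ 𝐃_n} of elements of the binary dihedral groups equals 𝐂_{2L} ∪ 𝐂_{2L}·i. (That is, the orbit of the quaternion 1 under the group (𝐃_m/𝐃_m; 𝐃_n/𝐃_n) acting by q ↦ a·q·b⁻¹ is 𝐂_{2L} ∪ 𝐂_{2L}·i.) -/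
open Quaternion Real

noncomputable section

/-- The quaternion `i`. -/
def qi : ℍ[ℝ] := ⟨0, 1, 0, 0⟩

/-- The element `cos(mπ/n) + sin(mπ/n)·k` of the binary cyclic group `𝐂_{2n}`. -/
def cycElt (n m : ℕ) : ℍ[ℝ] :=
  ⟨Real.cos (m * π / n), 0, 0, Real.sin (m * π / n)⟩

/-- The binary cyclic group `𝐂_{2n} = {cos(mπ/n) + sin(mπ/n)·k : m = 0,…,2n−1}`. -/
def binC2 (n : ℕ) : Set ℍ[ℝ] := {q | ∃ m : ℕ, m < 2 * n ∧ q = cycElt n m}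

/-- The element `cos(mπ/n)·i + sin(mπ/n)·j` of the binary dihedral group `𝐃_n`. -/
def dihElt (n m : ℕ) : ℍ[ℝ] :=
  ⟨0, Real.cos (m * π / n), Real.sin (m * π / n), 0⟩

/-- The binary dihedral group
`𝐃_n = 𝐂_{2n} ∪ {cos(mπ/n)·i + sin(mπ/n)·j : m = 0,…,2n−1}` (4n elements). -/
def binD (n : ℕ) : Set ℍ[ℝ] :=
  binC2 n ∪ {q | ∃ m : ℕ, m < 2 * n ∧ q = dihElt n m}

/-! Write `cyc θ = cos θ + sin θ · k`, so that `𝐃_n = {cyc θ, cyc θ · i : θ ∈ (π/n)ℤ}`. For such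
`a` and `b` the product `a · star b` is `cyc ψ` or `cyc ψ · i` with `ψ` one of `θ - φ`, `θ + φ`,
`θ + φ + π`. Since `(π/m)ℤ + (π/n)ℤ = (π/lcm(m,n))ℤ` by Bézout, and this group contains `π`, the
products are exactly the `cyc ψ` and `cyc ψ · i` with `ψ` in it. -/

def cyc (θ : ℝ) : ℍ[ℝ] := ⟨Real.cos θ, 0, 0, Real.sin θ⟩

@[simp] lemma re_cyc (θ : ℝ) : (cyc θ).re = Real.cos θ := rfl
@[simp] lemma imI_cyc (θ : ℝ) : (cyc θ).imI = 0 := rfl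
@[simp] lemma imJ_cyc (θ : ℝ) : (cyc θ).imJ = 0 := rfl
@[simp] lemma imK_cyc (θ : ℝ) : (cyc θ).imK = Real.sin θ := rfl
@[simp] lemma re_qi : qi.re = 0 := rfl
@[simp] lemma imI_qi : qi.imI = 1 := rfl
@[simp] lemma imJ_qi : qi.imJ = 0 := rfl
@[simp] lemma imK_qi : qi.imK = 0 := rfl

def angleGroup (n : ℕ) : AddSubgroup ℝ := AddSubgroup.zmultiples (π / n)

def cycDihSet (A : AddSubgroup ℝ) : Set ℍ[ℝ] := {q | ∃ θ ∈ A, q = cyc θ ∨ q = cyc θ * qi}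

lemma cyc_mul_star_cyc (θ φ : ℝ) : cyc θ * star (cyc φ) = cyc (θ - φ) := by
  simp only [Quaternion.ext_iff, re_mul, imI_mul, imJ_mul, imK_mul, re_star, imI_star,
    imJ_star, imK_star, re_cyc, imI_cyc, imJ_cyc, imK_cyc, cos_sub,
    sin_sub]
  refine ⟨?_, ?_, ?_, ?_⟩ <;> ring

lemma cyc_mul_qi_mul_star_cyc (θ φ : ℝ) : cyc θ * qi * star (cyc φ) = cyc (θ + φ) * qi := by
  simp only [Quaternion.ext_iff, re_mul, imI_mul, imJ_mul, imK_mul, re_star, imI_star,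
    imJ_star, imK_star, re_cyc, imI_cyc, imJ_cyc, imK_cyc, re_qi, imI_qi, imJ_qi, imK_qi,
    cos_add, sin_add]
  refine ⟨?_, ?_, ?_, ?_⟩ <;> ring

lemma cyc_mul_star_cyc_mul_qi (θ φ : ℝ) :
    cyc θ * star (cyc φ * qi) = cyc (θ + φ + π) * qi := by
  simp only [Quaternion.ext_iff, re_mul, imI_mul, imJ_mul, imK_mul, star_mul, re_star, imI_star,
    imJ_star, imK_star, re_cyc, imI_cyc, imJ_cyc, imK_cyc, re_qi, imI_qi, imJ_qi, imK_qi,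
    cos_add, sin_add, cos_pi, sin_pi]
  refine ⟨?_, ?_, ?_, ?_⟩ <;> ring

lemma cyc_mul_qi_mul_star_cyc_mul_qi (θ φ : ℝ) :
    cyc θ * qi * star (cyc φ * qi) = cyc (θ - φ) := by
  simp only [Quaternion.ext_iff, re_mul, imI_mul, imJ_mul, imK_mul, star_mul, re_star, imI_star,
    imJ_star, imK_star, re_cyc, imI_cyc, imJ_cyc, imK_cyc, re_qi, imI_qi, imJ_qi, imK_qi,
    cos_sub, sin_sub]
  refine ⟨?_, ?_, ?_, ?_⟩ <;> ring

lemma cyc_add_int_mul_two_pi (θ : ℝ) (k : ℤ) : cyc (θ + k * (2 * π)) = cyc θ := by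
  rw [cyc, cos_add_int_mul_two_pi, sin_add_int_mul_two_pi, cyc]

lemma cycElt_eq_cyc (n m : ℕ) : cycElt n m = cyc (m * π / n) := rfl

lemma dihElt_eq_cycElt_mul_qi (n m : ℕ) : dihElt n m = cycElt n m * qi := by
  rw [cycElt_eq_cyc]
  apply Quaternion.ext <;> simp [dihElt]

lemma binD_eq_binC2_union (n : ℕ) :
    binD n = binC2 n ∪ {q : ℍ[ℝ] | ∃ c ∈ binC2 n, q = c * qi} := by
  ext q
  simp only [binD, binC2, dihElt_eq_cycElt_mul_qi, Set.mem_union, Set.mem_ofPred_eq]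
  constructor
  · rintro (h | ⟨m, hm, rfl⟩)
    exacts [Or.inl h, Or.inr ⟨_, ⟨m, hm, rfl⟩, rfl⟩]
  · rintro (h | ⟨_, ⟨m, hm, rfl⟩, rfl⟩)
    exacts [Or.inl h, Or.inr ⟨m, hm, rfl⟩]

lemma mem_binC2_iff {n : ℕ} (hn : n ≠ 0) {q : ℍ[ℝ]} :
    q ∈ binC2 n ↔ ∃ θ ∈ angleGroup n, q = cyc θ := by
  constructor
  · rintro ⟨k, -, rfl⟩
    refine ⟨(k : ℤ) • (π / n), ⟨k, rfl⟩, ?_⟩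
    rw [cycElt_eq_cyc, zsmul_eq_mul, Int.cast_natCast, mul_div_assoc]
  · rintro ⟨-, ⟨t, rfl⟩, rfl⟩
    have h2n : (0 : ℤ) < 2 * n := by omega
    have hr : 0 ≤ t % (2 * n) := Int.emod_nonneg t h2n.ne'
    refine ⟨(t % (2 * n)).toNat, by have := Int.emod_lt_of_pos t h2n; omega, ?_⟩
    have hrn : (((t % (2 * n)).toNat : ℕ) : ℝ) = ((t % (2 * n) : ℤ) : ℝ) := by
      exact_mod_cast Int.toNat_of_nonneg hr
    have hdiv : ((t % (2 * n) : ℤ) : ℝ) + 2 * n * ((t / (2 * n) : ℤ) : ℝ) = t := by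
      exact_mod_cast Int.emod_add_mul_ediv t (2 * n)
    have hn' : (n : ℝ) ≠ 0 := Nat.cast_ne_zero.mpr hn
    symm
    dsimp only
    rw [cycElt_eq_cyc, hrn, ← cyc_add_int_mul_two_pi _ (t / (2 * n)), zsmul_eq_mul]
    congr 1
    field_simp
    linear_combination hdiv

lemma binD_eq_cycDihSet {n : ℕ} (hn : n ≠ 0) : binD n = cycDihSet (angleGroup n) := by
  ext q
  simp only [binD_eq_binC2_union, Set.mem_union, Set.mem_ofPred_eq, mem_binC2_iff hn, cycDihSet]
  constructor
  · rintro (⟨θ, hθ, rfl⟩ | ⟨_, ⟨θ, hθ, rfl⟩, rfl⟩)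
    exacts [⟨θ, hθ, Or.inl rfl⟩, ⟨θ, hθ, Or.inr rfl⟩]
  · rintro ⟨θ, hθ, rfl | rfl⟩
    exacts [Or.inl ⟨θ, hθ, rfl⟩, Or.inr ⟨_, ⟨θ, hθ, rfl⟩, rfl⟩]

lemma pi_mem_angleGroup {n : ℕ} (hn : n ≠ 0) : π ∈ angleGroup n :=
  ⟨n, by simp [field]⟩

lemma angleGroup_le_of_dvd {m n : ℕ} (hn : n ≠ 0) (h : m ∣ n) : angleGroup m ≤ angleGroup n := by
  obtain ⟨k, rfl⟩ := h
  have hm : (m : ℝ) ≠ 0 := by exact_mod_cast left_ne_zero_of_mul hn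
  have hk : (k : ℝ) ≠ 0 := by exact_mod_cast right_ne_zero_of_mul hn
  refine AddSubgroup.zmultiples_le_of_mem ⟨k, ?_⟩
  simp [field]

lemma angleGroup_sup_angleGroup {m n : ℕ} (hm : m ≠ 0) (hn : n ≠ 0) :
    angleGroup m ⊔ angleGroup n = angleGroup (Nat.lcm m n) := by
  have hL : Nat.lcm m n ≠ 0 := Nat.lcm_ne_zero hm hn
  refine le_antisymm (sup_le (angleGroup_le_of_dvd hL (Nat.dvd_lcm_left m n))
    (angleGroup_le_of_dvd hL (Nat.dvd_lcm_right m n))) (AddSubgroup.zmultiples_le_of_mem ?_)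
  -- `gcd = m a + n b` and `gcd * lcm = m n` give `π / lcm = b • (π / m) + a • (π / n)`
  have hbez : ((Nat.gcd m n : ℕ) : ℝ) = m * Nat.gcdA m n + n * Nat.gcdB m n := by
    exact_mod_cast Nat.gcd_eq_gcd_ab m n
  have hgl : ((Nat.gcd m n : ℕ) : ℝ) * Nat.lcm m n = m * n := by exact_mod_cast Nat.gcd_mul_lcm m n
  refine AddSubgroup.mem_sup.mpr
    ⟨Nat.gcdB m n • (π / m), ⟨_, rfl⟩, Nat.gcdA m n • (π / n), ⟨_, rfl⟩, ?_⟩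
  have hm' : (m : ℝ) ≠ 0 := Nat.cast_ne_zero.mpr hm
  have hn' : (n : ℝ) ≠ 0 := Nat.cast_ne_zero.mpr hn
  have hL' : (Nat.lcm m n : ℝ) ≠ 0 := Nat.cast_ne_zero.mpr hL
  simp only [zsmul_eq_mul]
  field_simp
  linear_combination hgl - (Nat.lcm m n : ℝ) * hbez

lemma mul_star_mem_cycDihSet {A B C : AddSubgroup ℝ} (hA : A ≤ C) (hB : B ≤ C) (hπ : π ∈ C)
    {a b : ℍ[ℝ]} (ha : a ∈ cycDihSet A) (hb : b ∈ cycDihSet B) : a * star b ∈ cycDihSet C := by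
  obtain ⟨θ, hθ, rfl | rfl⟩ := ha <;> obtain ⟨φ, hφ, rfl | rfl⟩ := hb
  · exact ⟨θ - φ, C.sub_mem (hA hθ) (hB hφ), Or.inl (cyc_mul_star_cyc θ φ)⟩
  · exact ⟨θ + φ + π, C.add_mem (C.add_mem (hA hθ) (hB hφ)) hπ,
      Or.inr (cyc_mul_star_cyc_mul_qi θ φ)⟩
  · exact ⟨θ + φ, C.add_mem (hA hθ) (hB hφ), Or.inr (cyc_mul_qi_mul_star_cyc θ φ)⟩
  · exact ⟨θ - φ, C.sub_mem (hA hθ) (hB hφ), Or.inl (cyc_mul_qi_mul_star_cyc_mul_qi θ φ)⟩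

lemma exists_mul_star_eq_of_mem_cycDihSet_sup {A B : AddSubgroup ℝ} {q : ℍ[ℝ]}
    (hq : q ∈ cycDihSet (A ⊔ B)) : ∃ a ∈ cycDihSet A, ∃ b ∈ cycDihSet B, q = a * star b := by
  obtain ⟨θ, hθ, rfl | rfl⟩ := hq <;> obtain ⟨α, hα, β, hβ, rfl⟩ := AddSubgroup.mem_sup.mp hθ
  · refine ⟨cyc α, ⟨α, hα, Or.inl rfl⟩, cyc (-β), ⟨-β, B.neg_mem hβ, Or.inl rfl⟩, ?_⟩
    rw [cyc_mul_star_cyc, sub_neg_eq_add]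
  · exact ⟨cyc α * qi, ⟨α, hα, Or.inr rfl⟩, cyc β, ⟨β, hβ, Or.inl rfl⟩,
      (cyc_mul_qi_mul_star_cyc α β).symm⟩

lemma setOf_mul_star_cycDihSet {A B : AddSubgroup ℝ} (hπ : π ∈ A ⊔ B) :
    {q | ∃ a ∈ cycDihSet A, ∃ b ∈ cycDihSet B, q = a * star b} = cycDihSet (A ⊔ B) := by
  ext q
  constructor
  · rintro ⟨a, ha, b, hb, rfl⟩
    exact mul_star_mem_cycDihSet le_sup_left le_sup_right hπ ha hb
  · exact exists_mul_star_eq_of_mem_cycDihSet_sup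

/-- For `m, n ≥ 1` and `L = lcm(m, n)`, the orbit of the quaternion `1`
under the group `(𝐃_m/𝐃_m; 𝐃_n/𝐃_n)` acting by `q ↦ a·q·b⁻¹` is `𝐂_{2L} ∪ 𝐂_{2L}·i`. -/
theorem orbit_of_one_under_binaryDihedral_product (m n : ℕ) (hm : 1 ≤ m) (hn : 1 ≤ n) :
    {q : ℍ[ℝ] | ∃ a ∈ binD m, ∃ b ∈ binD n, q = a * star b} =
      binC2 (Nat.lcm m n) ∪ {q : ℍ[ℝ] | ∃ c ∈ binC2 (Nat.lcm m n), q = c * qi} := by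
  have hm0 : m ≠ 0 := Nat.one_le_iff_ne_zero.mp hm
  have hn0 : n ≠ 0 := Nat.one_le_iff_ne_zero.mp hn
  have hL : Nat.lcm m n ≠ 0 := Nat.lcm_ne_zero hm0 hn0
  have hsup := angleGroup_sup_angleGroup hm0 hn0
  rw [← binD_eq_binC2_union, binD_eq_cycDihSet hm0, binD_eq_cycDihSet hn0,
    binD_eq_cycDihSet hL, ← hsup]
  exact setOf_mul_star_cycDihSet (hsup ▸ pi_mem_angleGroup hL)

end
end

section
/- Let m, n ≥ 1, L = lcm(m, n), and let v be the unit quaternion v = (cos(π/(2L)) + cos(π/(2L))·i + sin(π/(2L))·j + sin(π/(2L))·k)/√2. Then for all a ∈ 𝐃_m and b ∈ 𝐃_n one has re(a * v * star b) ≤ cos(π/(2L))/√2, with equality when a = b = 1. Consequently, the distance in the orbit space of S³ under the action q ↦ a·q·b⁻¹ (a ∈ 𝐃_m, b ∈ 𝐃_n) between the orbit of 1 and the orbit of v is exactly arccos(cos(π/(2L))/√2), so the diameter of this orbit space is strictly greater than π/4. -/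
open Quaternion Real

noncomputable section

/-- The unit quaternion
`v = (cos(π/(2L)) + cos(π/(2L))·i + sin(π/(2L))·j + sin(π/(2L))·k)/√2`. -/
def dihVertex (L : ℕ) : ℍ[ℝ] :=
  ⟨Real.cos (π / (2 * L)) / Real.sqrt 2, Real.cos (π / (2 * L)) / Real.sqrt 2,
    Real.sin (π / (2 * L)) / Real.sqrt 2, Real.sin (π / (2 * L)) / Real.sqrt 2⟩

/-!
Write `θ = π / (2L)`. The elements of `𝐃_m` and `𝐃_n` are `cos α + sin α·k` and
`(cos α + sin α·k)·i` with `α` a multiple of `π/m`, resp. `π/n`, i.e. an even multiple of `θ`,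
and `v = (cos θ + sin θ·k)(1 + i)/√2`. Expanding, `re(a·v·b⁻¹) = cos((2t+1)θ)/√2` for an integer
`t`. An odd multiple of `θ` is never closer to `2πℤ` than `θ` itself:
`cos θ - cos((2t+1)θ) = 2 sin(tθ) sin((t+1)θ) ≥ 0`, because `tθ` and `(t+1)θ` lie in a common
interval `[jπ, (j+1)π]`. The orbit distance follows since `arccos` is antitone, and `cos θ < 1`
gives `arccos(cos θ/√2) > arccos(1/√2) = π/4`.
-/

theorem sin_int_mul_mul_sin_succ_nonneg {N : ℕ} (hN : 0 < N) (t : ℤ) :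
    0 ≤ sin (t * (π / N)) * sin ((t + 1) * (π / N)) := by
  have hN' : (0 : ℝ) < N := by exact_mod_cast hN
  set r := t % N
  have hr₀ : (0 : ℝ) ≤ r := by exact_mod_cast Int.emod_nonneg t (by omega)
  have hr₁ : (r : ℝ) + 1 ≤ N := by exact_mod_cast Int.emod_lt_of_pos t (by omega)
  have ht : (t : ℝ) = r + N * (t / N : ℤ) := by exact_mod_cast (Int.emod_add_mul_ediv t N).symm
  have hsin (s : ℝ) : sin ((t + s) * (π / N)) = (-1) ^ (t / N) * sin ((r + s) * (π / N)) := by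
    rw [← sin_add_int_mul_pi, ht]
    field_simp
    ring_nf
  have hnonneg (s : ℝ) (hs : 0 ≤ s) (hsN : r + s ≤ N) : 0 ≤ sin ((r + s) * (π / N)) := by
    apply sin_nonneg_of_nonneg_of_le_pi (by positivity)
    calc (r + s) * (π / N) ≤ N * (π / N) := by gcongr
      _ = π := by field_simp
  have h₀ := hsin 0
  have h₁ := hsin 1
  rw [add_zero, add_zero] at h₀
  rw [h₀, h₁, mul_mul_mul_comm, ← mul_zpow, neg_one_mul, neg_neg, one_zpow, one_mul]
  have := mul_nonneg (hnonneg 0 le_rfl (by linarith)) (hnonneg 1 zero_le_one hr₁)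
  rwa [add_zero] at this

theorem cos_odd_mul_le {N : ℕ} (hN : 0 < N) (t : ℤ) :
    cos ((2 * t + 1) * (π / N)) ≤ cos (π / N) := by
  have h := cos_sub_cos (π / N) ((2 * t + 1) * (π / N))
  rw [show (π / N + (2 * t + 1) * (π / N)) / 2 = (t + 1) * (π / N) by ring,
    show (π / N - (2 * t + 1) * (π / N)) / 2 = -(t * (π / N)) by ring, sin_neg] at h
  nlinarith [sin_int_mul_mul_sin_succ_nonneg hN t]

theorem pi_div_four_lt_arccos_div_sqrt_two {x : ℝ} (hx : x < 1) : π / 4 < arccos (x / √2) := by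
  rw [← not_le, arccos_le_pi_div_four, not_le, div_lt_iff₀ (by positivity)]
  nlinarith [sq_sqrt (zero_le_two : (0 : ℝ) ≤ 2)]

section OrbitDistance

variable {α β : Type*} {A : Set α} {B : Set β} {f : α → β → ℝ}

theorem sInf_arccos_eq_of_le {c : ℝ} (hle : ∀ a ∈ A, ∀ b ∈ B, f a b ≤ c) {a₀ b₀}
    (ha₀ : a₀ ∈ A) (hb₀ : b₀ ∈ B) (h₀ : f a₀ b₀ = c) :
    sInf {t | ∃ a ∈ A, ∃ b ∈ B, t = arccos (f a b)} = arccos c :=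
  IsLeast.csInf_eq ⟨⟨a₀, ha₀, b₀, hb₀, by rw [h₀]⟩,
    by rintro _ ⟨a, ha, b, hb, rfl⟩; exact arccos_le_arccos (hle a ha b hb)⟩

theorem sInf_arccos_le_pi : sInf {t | ∃ a ∈ A, ∃ b ∈ B, t = arccos (f a b)} ≤ π := by
  rcases Set.eq_empty_or_nonempty {t | ∃ a ∈ A, ∃ b ∈ B, t = arccos (f a b)} with h | ⟨t, ht⟩
  · rw [h, Real.sInf_empty]
    exact pi_pos.le
  · refine csInf_le_of_le ⟨0, ?_⟩ ht ?_
    · rintro _ ⟨a, -, b, -, rfl⟩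
      exact arccos_nonneg _
    · obtain ⟨a, -, b, -, rfl⟩ := ht
      exact arccos_le_pi _

end OrbitDistance

theorem one_mem_binD {N : ℕ} (hN : 0 < N) : (1 : ℍ[ℝ]) ∈ binD N :=
  Or.inl ⟨0, by omega, by ext <;> simp [cycElt]⟩

theorem norm_dihVertex (L : ℕ) : ‖dihVertex L‖ = 1 := by
  rw [norm_eq_sqrt_real_inner, Quaternion.inner_self, Quaternion.normSq_def', sqrt_eq_one]
  simp only [dihVertex, div_pow, sq_sqrt (zero_le_two : (0 : ℝ) ≤ 2)]
  linear_combination sin_sq_add_cos_sq (π / (2 * L))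

section VertexProducts

variable (L m n p q : ℕ)

theorem re_cycElt_mul_dihVertex_mul_star_cycElt :
    (cycElt m p * dihVertex L * star (cycElt n q)).re =
      cos (π / (2 * L) + p * π / m - q * π / n) / √2 := by
  simp only [Quaternion.re_mul, Quaternion.imI_mul, Quaternion.imJ_mul, Quaternion.imK_mul,
    Quaternion.re_star, Quaternion.imI_star, Quaternion.imJ_star, Quaternion.imK_star]
  simp only [cycElt, dihVertex, cos_sub, cos_add, sin_add]
  ring

theorem re_cycElt_mul_dihVertex_mul_star_dihElt :
    (cycElt m p * dihVertex L * star (dihElt n q)).re =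
      cos (π / (2 * L) + p * π / m - q * π / n) / √2 := by
  simp only [Quaternion.re_mul, Quaternion.imI_mul, Quaternion.imJ_mul, Quaternion.imK_mul,
    Quaternion.re_star, Quaternion.imI_star, Quaternion.imJ_star, Quaternion.imK_star]
  simp only [cycElt, dihElt, dihVertex, cos_sub, cos_add, sin_add]
  ring

theorem re_dihElt_mul_dihVertex_mul_star_cycElt :
    (dihElt m p * dihVertex L * star (cycElt n q)).re =
      -cos (π / (2 * L) - p * π / m + q * π / n) / √2 := by
  simp only [Quaternion.re_mul, Quaternion.imI_mul, Quaternion.imJ_mul, Quaternion.imK_mul,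
    Quaternion.re_star, Quaternion.imI_star, Quaternion.imJ_star, Quaternion.imK_star]
  simp only [cycElt, dihElt, dihVertex, cos_add, cos_sub, sin_sub]
  ring

theorem re_dihElt_mul_dihVertex_mul_star_dihElt :
    (dihElt m p * dihVertex L * star (dihElt n q)).re =
      cos (π / (2 * L) - p * π / m + q * π / n) / √2 := by
  simp only [Quaternion.re_mul, Quaternion.imI_mul, Quaternion.imJ_mul, Quaternion.imK_mul,
    Quaternion.re_star, Quaternion.imI_star, Quaternion.imJ_star, Quaternion.imK_star]
  simp only [dihElt, dihVertex, cos_add, cos_sub, sin_sub]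
  ring

end VertexProducts

theorem natCast_mul_pi_div_eq {L N k : ℕ} (hL : 0 < L) (hk : L = N * k) (p : ℕ) :
    p * π / N = 2 * (p * k) * (π / (2 * L)) := by
  subst hk
  have hN : (N : ℝ) ≠ 0 := by exact_mod_cast (Nat.pos_of_mul_pos_right hL).ne'
  have hk : (k : ℝ) ≠ 0 := by exact_mod_cast (Nat.pos_of_mul_pos_left hL).ne'
  push_cast
  field_simp

theorem exists_re_mul_dihVertex_mul_star_eq_cos_odd_mul {L m n : ℕ} (hL : 0 < L)
    (hm : m ∣ L) (hn : n ∣ L) {a b : ℍ[ℝ]} (ha : a ∈ binD m) (hb : b ∈ binD n) :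
    ∃ t : ℤ, (a * dihVertex L * star b).re = cos ((2 * t + 1) * (π / (2 * L))) / √2 := by
  obtain ⟨k, hk⟩ := hm
  obtain ⟨l, hl⟩ := hn
  have hπ : π = 2 * L * (π / (2 * L)) := by field_simp
  rcases ha with ⟨p, -, rfl⟩ | ⟨p, -, rfl⟩ <;> rcases hb with ⟨q, -, rfl⟩ | ⟨q, -, rfl⟩
  · refine ⟨p * k - q * l, ?_⟩
    rw [re_cycElt_mul_dihVertex_mul_star_cycElt, natCast_mul_pi_div_eq hL hk,
      natCast_mul_pi_div_eq hL hl]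
    congr 2
    push_cast
    ring
  · refine ⟨p * k - q * l, ?_⟩
    rw [re_cycElt_mul_dihVertex_mul_star_dihElt, natCast_mul_pi_div_eq hL hk,
      natCast_mul_pi_div_eq hL hl]
    congr 2
    push_cast
    ring
  · refine ⟨q * l - p * k + L, ?_⟩
    rw [re_dihElt_mul_dihVertex_mul_star_cycElt, ← cos_add_pi, natCast_mul_pi_div_eq hL hk,
      natCast_mul_pi_div_eq hL hl]
    congr 2
    push_cast
    linear_combination hπ
  · refine ⟨q * l - p * k, ?_⟩
    rw [re_dihElt_mul_dihVertex_mul_star_dihElt, natCast_mul_pi_div_eq hL hk,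
      natCast_mul_pi_div_eq hL hl]
    congr 2
    push_cast
    ring

theorem re_mul_dihVertex_mul_star_le {L m n : ℕ} (hL : 0 < L) (hm : m ∣ L) (hn : n ∣ L)
    {a b : ℍ[ℝ]} (ha : a ∈ binD m) (hb : b ∈ binD n) :
    (a * dihVertex L * star b).re ≤ cos (π / (2 * L)) / √2 := by
  obtain ⟨t, ht⟩ := exists_re_mul_dihVertex_mul_star_eq_cos_odd_mul hL hm hn ha hb
  rw [ht]
  gcongr
  exact_mod_cast cos_odd_mul_le (N := 2 * L) (by omega) t

/-- For `m, n ≥ 1`, `L = lcm(m, n)` and the vertex `v` above: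
`re(a·v·b⁻¹) ≤ cos(π/(2L))/√2` for all `a ∈ 𝐃_m`, `b ∈ 𝐃_n`, with equality at
`a = b = 1`; hence the distance between the orbits of `1` and `v` under
`q ↦ a·q·b⁻¹` is exactly `arccos(cos(π/(2L))/√2)`, and the diameter of the orbit
space is strictly greater than `π/4`. -/
theorem binaryDihedral_product_vertex_distance (m n : ℕ) (hm : 1 ≤ m) (hn : 1 ≤ n) :
    (∀ a ∈ binD m, ∀ b ∈ binD n,
        (a * dihVertex (Nat.lcm m n) * star b).re ≤
          Real.cos (π / (2 * Nat.lcm m n)) / Real.sqrt 2) ∧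
    ((1 : ℍ[ℝ]) * dihVertex (Nat.lcm m n) * star (1 : ℍ[ℝ])).re =
        Real.cos (π / (2 * Nat.lcm m n)) / Real.sqrt 2 ∧
    sInf {t : ℝ | ∃ a ∈ binD m, ∃ b ∈ binD n,
        t = Real.arccos ((a * dihVertex (Nat.lcm m n) * star b).re)} =
      Real.arccos (Real.cos (π / (2 * Nat.lcm m n)) / Real.sqrt 2) ∧
    sSup {d : ℝ | ∃ x y : ℍ[ℝ], ‖x‖ = 1 ∧ ‖y‖ = 1 ∧
        d = sInf {t : ℝ | ∃ a ∈ binD m, ∃ b ∈ binD n,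
          t = Real.arccos ((a * x * star b * star y).re)}} > π / 4 := by
  set L := Nat.lcm m n
  have hL : 0 < L := Nat.lcm_pos hm hn
  have hle : ∀ a ∈ binD m, ∀ b ∈ binD n,
      (a * dihVertex L * star b).re ≤ cos (π / (2 * L)) / √2 := fun a ha b hb ↦
    re_mul_dihVertex_mul_star_le hL (Nat.dvd_lcm_left m n) (Nat.dvd_lcm_right m n) ha hb
  have hone : ((1 : ℍ[ℝ]) * dihVertex L * star (1 : ℍ[ℝ])).re = cos (π / (2 * L)) / √2 := by
    rw [one_mul, star_one, mul_one]
    rfl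
  have hinf := sInf_arccos_eq_of_le hle (one_mem_binD hm) (one_mem_binD hn) hone
  have hcos : cos (π / (2 * L)) < 1 := by
    have hL' : (1 : ℝ) ≤ L := by exact_mod_cast hL
    rw [← cos_zero]
    exact cos_lt_cos_of_nonneg_of_le_pi le_rfl (div_le_self pi_pos.le (by linarith))
      (by positivity)
  refine ⟨hle, hone, hinf, ?_⟩
  calc π / 4 < arccos (cos (π / (2 * L)) / √2) := pi_div_four_lt_arccos_div_sqrt_two hcos
    _ ≤ _ := by
      refine le_csSup ⟨π, ?_⟩ ⟨dihVertex L, 1, norm_dihVertex L, norm_one, ?_⟩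
      · rintro _ ⟨x, y, -, -, rfl⟩
        exact sInf_arccos_le_pi
      · simpa only [star_one, mul_one] using hinf.symm

end
end

section
/- Let n ≥ 1 and let G ⊂ O(n+1) be the group of signed permutations of coordinates of ℝ^{n+1} (the full symmetry group of the cubic tessellation of Sⁿ). Then the diameter of the orbit space Sⁿ/G equals arccos(1/√(n+1)). Explicitly: (i) for all unit vectors x, y ∈ ℝ^{n+1} there exist a permutation σ of the coordinates and signs ε_i ∈ {1, −1} such that ∑_i ε_i · x_{σ(i)} · y_i ≥ 1/√(n+1); and (ii) taking x to be a standard basis vector and y = (1, 1, …, 1)/√(n+1), every signed permutation g satisfies ⟨g·x, y⟩ ≤ 1/√(n+1). -/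
/-!
After sorting `|x|` and `|y|` into nonincreasing order and choosing the signs so that every
term is `|x_{σ i}| |y_i|`, it remains to show `1/√m ≤ ∑ aᵢ bᵢ` for nonincreasing nonnegative
unit vectors `a, b ∈ ℝᵐ`. Abel summation writes `∑ aᵢ bᵢ = ∑ₖ (aₖ - aₖ₊₁) Bₖ` with `Bₖ` the
prefix sums of `b`. As `b` is nonincreasing, its first `k` squares carry at least the fraction
`k/m` of the total, so `Bₖ ≥ √(k/m)`; the same identity for `a · a` and Cauchy–Schwarz
`Aₖ ≤ √k` give `∑ₖ (aₖ - aₖ₊₁) √k ≥ 1`. Part (ii) holds because exactly one term is nonzero.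
-/

open Real Finset

lemma sum_range_mul_eq_sum_range_sub_mul_sum (f g : ℕ → ℝ) (m : ℕ) :
    ∑ i ∈ range m, f i * g i =
      ∑ k ∈ range m, (f k - f (k + 1)) * ∑ i ∈ range (k + 1), g i
        + f m * ∑ i ∈ range m, g i := by
  induction m with
  | zero => simp
  | succ m ih => simp only [sum_range_succ, ih]; ring

lemma natCast_mul_sum_range_le_of_antitone {c : ℕ → ℝ} (hc : Antitone c) {k m : ℕ}
    (hkm : k ≤ m) : k * ∑ i ∈ range m, c i ≤ m * ∑ i ∈ range k, c i := by
  have htail : ∑ i ∈ Ico k m, c i ≤ (m - k : ℕ) * c k := by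
    simpa using sum_le_card_nsmul (Ico k m) c (c k) fun i hi => hc (mem_Ico.1 hi).1
  have hhead : k * c k ≤ ∑ i ∈ range k, c i := by
    simpa using card_nsmul_le_sum (range k) c (c k) fun i hi => hc (mem_range.1 hi).le
  rw [← sum_range_add_sum_Ico c hkm, Nat.cast_sub hkm] at *
  have hk : (0 : ℝ) ≤ k := k.cast_nonneg
  have hmk : (0 : ℝ) ≤ m - k := sub_nonneg.2 (Nat.cast_le.2 hkm)
  nlinarith [mul_le_mul_of_nonneg_left htail hk, mul_le_mul_of_nonneg_left hhead hmk]

lemma sum_range_le_sqrt (a : ℕ → ℝ) {k : ℕ} (ha : ∑ i ∈ range k, a i ^ 2 ≤ 1) :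
    ∑ i ∈ range k, a i ≤ √k := by
  refine (le_abs_self _).trans (Real.abs_le_sqrt ?_)
  calc (∑ i ∈ range k, a i) ^ 2 ≤ k * ∑ i ∈ range k, a i ^ 2 := by
        simpa using sq_sum_le_card_mul_sum_sq (s := range k) (f := a)
    _ ≤ k := mul_le_of_le_one_right k.cast_nonneg ha

lemma sqrt_div_le_sum_range_of_antitone {b : ℕ → ℝ} (hb0 : 0 ≤ b) (hb : Antitone b)
    {m k : ℕ} (hb1 : ∑ i ∈ range m, b i ^ 2 = 1) (hkm : k ≤ m) :
    √(k / m) ≤ ∑ i ∈ range k, b i := by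
  have hsq : Antitone (b · ^ 2) := fun i j hij => pow_le_pow_left₀ (hb0 j) (hb hij) 2
  have hmean : (k : ℝ) / m ≤ ∑ i ∈ range k, b i ^ 2 := by
    rcases (Nat.zero_le m).eq_or_lt with rfl | hm
    · simp at hb1
    rw [div_le_iff₀ (by exact_mod_cast hm), mul_comm]
    simpa [hb1] using natCast_mul_sum_range_le_of_antitone hsq hkm
  calc √(k / m) ≤ √((∑ i ∈ range k, b i) ^ 2) :=
        Real.sqrt_le_sqrt (hmean.trans (sum_sq_le_sq_sum_of_nonneg fun i _ => hb0 i))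
    _ = ∑ i ∈ range k, b i := Real.sqrt_sq (sum_nonneg fun i _ => hb0 i)

theorem inv_sqrt_le_sum_range_mul_of_antitone {a b : ℕ → ℝ} (hb0 : 0 ≤ b)
    (ha : Antitone a) (hb : Antitone b) {m : ℕ} (ham : a m = 0)
    (ha1 : ∑ i ∈ range m, a i ^ 2 = 1) (hb1 : ∑ i ∈ range m, b i ^ 2 = 1) :
    1 / √m ≤ ∑ i ∈ range m, a i * b i := by
  have hd : ∀ k, 0 ≤ a k - a (k + 1) := fun k => sub_nonneg.2 (ha k.le_succ)
  have hprefix : ∀ k ∈ range m, ∑ i ∈ range (k + 1), a i ^ 2 ≤ 1 := fun k hk =>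
    ha1 ▸ sum_le_sum_of_subset_of_nonneg (range_subset_range.2 (mem_range.1 hk))
      fun i _ _ => sq_nonneg _
  have hone : 1 ≤ ∑ k ∈ range m, (a k - a (k + 1)) * √(k + 1) := by
    calc (1 : ℝ) = ∑ i ∈ range m, a i * a i := by simpa [sq] using ha1.symm
      _ = ∑ k ∈ range m, (a k - a (k + 1)) * ∑ i ∈ range (k + 1), a i := by
        simp [sum_range_mul_eq_sum_range_sub_mul_sum a a m, ham]
      _ ≤ _ := sum_le_sum fun k hk => mul_le_mul_of_nonneg_left
        (by exact_mod_cast sum_range_le_sqrt a (hprefix k hk)) (hd k)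
  calc 1 / √m ≤ (∑ k ∈ range m, (a k - a (k + 1)) * √(k + 1)) / √m := by gcongr
    _ = ∑ k ∈ range m, (a k - a (k + 1)) * √((k + 1 : ℕ) / m) := by
      rw [sum_div]
      refine sum_congr rfl fun k _ => ?_
      rw [Real.sqrt_div' _ m.cast_nonneg]; push_cast; ring
    _ ≤ ∑ k ∈ range m, (a k - a (k + 1)) * ∑ i ∈ range (k + 1), b i :=
      sum_le_sum fun k hk => mul_le_mul_of_nonneg_left
        (sqrt_div_le_sum_range_of_antitone hb0 hb hb1 (mem_range.1 hk)) (hd k)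
    _ = ∑ i ∈ range m, a i * b i := by
      simp [sum_range_mul_eq_sum_range_sub_mul_sum a b m, ham]

section ExtendByZero

variable {α : Type*} [Zero α] {m : ℕ}

def Fin.extendByZero (a : Fin m → α) (k : ℕ) : α := if h : k < m then a ⟨k, h⟩ else 0

@[simp]
lemma Fin.extendByZero_val (a : Fin m → α) (i : Fin m) : Fin.extendByZero a i = a i :=
  dif_pos i.isLt

@[simp]
lemma Fin.extendByZero_self (a : Fin m → α) : Fin.extendByZero a m = 0 :=
  dif_neg m.lt_irrefl

variable [Preorder α]

lemma Fin.extendByZero_nonneg {a : Fin m → α} (ha0 : 0 ≤ a) : 0 ≤ Fin.extendByZero a := by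
  intro k
  unfold Fin.extendByZero
  split_ifs
  exacts [ha0 _, le_rfl]

lemma Fin.antitone_extendByZero {a : Fin m → α} (ha0 : 0 ≤ a) (ha : Antitone a) :
    Antitone (Fin.extendByZero a) := by
  intro i j hij
  by_cases hj : j < m
  · have hi : i < m := hij.trans_lt hj
    simpa [Fin.extendByZero, hi, hj] using ha (show (⟨i, hi⟩ : Fin m) ≤ ⟨j, hj⟩ from hij)
  · simpa [Fin.extendByZero, hj] using Fin.extendByZero_nonneg ha0 i

end ExtendByZero

theorem inv_sqrt_le_sum_mul_of_antitone {m : ℕ} {a b : Fin m → ℝ} (ha0 : 0 ≤ a) (hb0 : 0 ≤ b)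
    (ha : Antitone a) (hb : Antitone b) (ha1 : ∑ i, a i ^ 2 = 1) (hb1 : ∑ i, b i ^ 2 = 1) :
    1 / √m ≤ ∑ i, a i * b i := by
  simp only [← Fin.extendByZero_val a, ← Fin.extendByZero_val b,
    Fin.sum_univ_eq_sum_range (fun k => Fin.extendByZero a k ^ 2),
    Fin.sum_univ_eq_sum_range (fun k => Fin.extendByZero b k ^ 2),
    Fin.sum_univ_eq_sum_range (fun k => Fin.extendByZero a k * Fin.extendByZero b k)] at *
  exact inv_sqrt_le_sum_range_mul_of_antitone (Fin.extendByZero_nonneg hb0)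
    (Fin.antitone_extendByZero ha0 ha) (Fin.antitone_extendByZero hb0 hb)
    (Fin.extendByZero_self a) ha1 hb1

lemma exists_perm_antitone_comp {α : Type*} [LinearOrder α] {m : ℕ} (f : Fin m → α) :
    ∃ σ : Equiv.Perm (Fin m), Antitone (f ∘ σ) :=
  ⟨Tuple.sort (OrderDual.toDual ∘ f), monotone_toDual_comp_iff.1 (Tuple.monotone_sort _)⟩

lemma exists_sign_mul_eq_abs {ι : Type*} (t : ι → ℝ) :
    ∃ ε : ι → ℝ, (∀ i, ε i = 1 ∨ ε i = -1) ∧ ∀ i, ε i * t i = |t i| := by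
  refine ⟨fun i => if t i < 0 then -1 else 1, fun i => ?_, fun i => ?_⟩ <;> dsimp only
  · split_ifs <;> simp
  split_ifs with h
  · simp [abs_of_neg h]
  · simp [abs_of_nonneg (not_lt.1 h)]

lemma sum_mul_ite_perm_apply_eq_mul_le {ι : Type*} [Fintype ι] [DecidableEq ι]
    (σ : Equiv.Perm ι) (j : ι) {ε : ι → ℝ} (hε : ∀ i, ε i ≤ 1) {c : ℝ} (hc : 0 ≤ c) :
    ∑ i, ε i * (if σ i = j then (1 : ℝ) else 0) * c ≤ c := by
  calc ∑ i, ε i * (if σ i = j then (1 : ℝ) else 0) * c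
      ≤ ∑ i, (if σ i = j then c else 0) := sum_le_sum fun i _ => by
        split_ifs
        · simpa using mul_le_of_le_one_left hc (hε i)
        · simp
    _ = c := by
      rw [Equiv.sum_comp σ (fun k => if k = j then c else 0), sum_ite_eq', if_pos (mem_univ j)]

theorem diameter_Sn_mod_signedPermutations_general (n : ℕ) :
    (∀ x y : Fin (n + 1) → ℝ, (∑ i, x i ^ 2) = 1 → (∑ i, y i ^ 2) = 1 →
      ∃ σ : Equiv.Perm (Fin (n + 1)), ∃ ε : Fin (n + 1) → ℝ,
        (∀ i, ε i = 1 ∨ ε i = -1) ∧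
        1 / Real.sqrt (n + 1) ≤ ∑ i, ε i * x (σ i) * y i) ∧
    (∀ σ : Equiv.Perm (Fin (n + 1)), ∀ ε : Fin (n + 1) → ℝ,
      (∀ i, ε i = 1 ∨ ε i = -1) →
      (∑ i, ε i * (if σ i = 0 then (1 : ℝ) else 0) * (1 / Real.sqrt (n + 1))) ≤
        1 / Real.sqrt (n + 1)) := by
  refine ⟨fun x y hx hy => ?_, fun σ ε hε => ?_⟩
  · obtain ⟨τ, hτ⟩ := exists_perm_antitone_comp (|x ·|)
    obtain ⟨ρ, hρ⟩ := exists_perm_antitone_comp (|y ·|)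
    obtain ⟨ε, hε, hεxy⟩ := exists_sign_mul_eq_abs fun i => x ((τ * ρ⁻¹) i) * y i
    refine ⟨τ * ρ⁻¹, ε, hε, ?_⟩
    have hsorted := inv_sqrt_le_sum_mul_of_antitone (fun _ => abs_nonneg _)
      (fun _ => abs_nonneg _) hτ hρ
      (by simpa [sq_abs] using (Equiv.sum_comp τ (x · ^ 2)).trans hx)
      (by simpa [sq_abs] using (Equiv.sum_comp ρ (y · ^ 2)).trans hy)
    calc 1 / √(n + 1) = 1 / √(n + 1 : ℕ) := by push_cast; rfl
      _ ≤ ∑ j, |x (τ j)| * |y (ρ j)| := hsorted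
      _ = ∑ i, |x ((τ * ρ⁻¹) i)| * |y i| := by
        rw [← Equiv.sum_comp ρ (fun i => |x ((τ * ρ⁻¹) i)| * |y i|)]; simp
      _ = ∑ i, ε i * x ((τ * ρ⁻¹) i) * y i := by simp only [mul_assoc, hεxy, abs_mul]
  · exact sum_mul_ite_perm_apply_eq_mul_le σ 0
      (fun i => by rcases hε i with h | h <;> norm_num [h]) (by positivity)

/-- Let `G ⊂ O(n+1)` be the group of signed permutations of coordinates
(the full symmetry group of the cubic tessellation of `Sⁿ`).  The diameter of `Sⁿ/G` is
`arccos(1/√(n+1))`.  Explicitly: (i) any two unit vectors can be moved within geodesic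
distance `arccos(1/√(n+1))` of each other by a signed permutation, i.e. some signed
permutation makes their inner product at least `1/√(n+1)`; and (ii) for `x` a standard
basis vector and `y = (1,…,1)/√(n+1)`, every signed permutation `g` satisfies
`⟨g·x, y⟩ ≤ 1/√(n+1)`. -/
theorem diameter_Sn_mod_signedPermutations (n : ℕ) (hn : 1 ≤ n) :
    (∀ x y : Fin (n + 1) → ℝ, (∑ i, x i ^ 2) = 1 → (∑ i, y i ^ 2) = 1 →
      ∃ σ : Equiv.Perm (Fin (n + 1)), ∃ ε : Fin (n + 1) → ℝ,
        (∀ i, ε i = 1 ∨ ε i = -1) ∧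
        1 / Real.sqrt (n + 1) ≤ ∑ i, ε i * x (σ i) * y i) ∧
    (∀ σ : Equiv.Perm (Fin (n + 1)), ∀ ε : Fin (n + 1) → ℝ,
      (∀ i, ε i = 1 ∨ ε i = -1) →
      (∑ i, ε i * (if σ i = 0 then (1 : ℝ) else 0) * (1 / Real.sqrt (n + 1))) ≤
        1 / Real.sqrt (n + 1)) :=
  diameter_Sn_mod_signedPermutations_general n
end
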